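/- arXiv:2309.14128 — 2 statements merged into one kernel-verified Lean document; each statement's English description precedes it below -/
import Mathlib

section
/- Let n ≥ 1, let a = (a₁,…,aₙ) ∈ ℤⁿ be a nonzero integer vector, and let c ∈ ℝ/ℤ. Then the affine toric hyperplane H = θ_a⁻¹(c) is a connected subset of Tⁿ if and only if gcd(a₁,…,aₙ) = 1 (i.e., if and only if H is simple). -/
open Set

/-- The `n`-torus `ℝⁿ/ℤⁿ`, modelled as a product of circles `ℝ/ℤ`. -/
abbrev Torus (n : ℕ) := Fin n → AddCircle (1 : ℝ)

/-- The group homomorphism `Tⁿ → ℝ/ℤ` induced by `x ↦ a₁x₁ + ⋯ + aₙxₙ`. -/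
noncomputable def theta {n : ℕ} (a : Fin n → ℤ) (x : Torus n) : AddCircle (1 : ℝ) :=
  ∑ i, a i • x i

/-- The affine toric hyperplane with normal vector `a` and intercept `c`. -/
def Hyp {n : ℕ} (a : Fin n → ℤ) (c : AddCircle (1 : ℝ)) : Set (Torus n) :=
  {x | theta a x = c}

/-!
If `g = gcd(a) > 1`, write `a = g • b` with `b ≠ 0`. Then `θ_b` maps `H` onto `{y | g • y = c}`, a
translate of the `g`-torsion of the circle, which is finite with at least two points; so `H` has a
disconnected continuous image. If `g = 1`, Bézout gives `z` with `a ⬝ᵥ z = 1`. A lift `u ∈ ℝⁿ` of a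
point of `H` satisfies `a ⬝ᵥ u = t + k` with `k ∈ ℤ`, and `u - k • z` projects to the same point, so
`H` is the image of the real affine hyperplane `{v | a ⬝ᵥ v = t}` under `ℝⁿ → Tⁿ`, hence connected.
-/

namespace AddCircle

variable {𝕜 : Type*} [Field 𝕜] [LinearOrder 𝕜] [IsStrictOrderedRing 𝕜] [TopologicalSpace 𝕜]
  [OrderTopology 𝕜] {p : 𝕜} [Fact (0 < p)]

theorem not_isPreconnected_setOf_nsmul_eq {m : ℕ} (hm : 1 < m) (y₀ : AddCircle p) :
    ¬ IsPreconnected {y : AddCircle p | m • y = m • y₀} := by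
  intro h
  have hfin : {y : AddCircle p | m • y = m • y₀}.Finite :=
    ((finite_torsion p (by omega : 0 < m)).image (y₀ + ·)).subset fun y hy =>
      ⟨y - y₀, by simp [smul_sub, mem_ofPred_eq.mp hy], add_sub_cancel y₀ y⟩
  have hord := addOrderOf_period_div (p := p) (by omega : 0 < m)
  refine h.infinite_of_nontrivial ⟨y₀, rfl, y₀ + ↑(p / m), ?_, ?_⟩ hfin
  · have : m • ((p / m : 𝕜) : AddCircle p) = 0 := by
      simpa only [hord] using addOrderOf_nsmul_eq_zero ((p / m : 𝕜) : AddCircle p)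
    rw [mem_ofPred_eq, smul_add, this, add_zero]
  · rw [ne_eq, left_eq_add, ← AddMonoid.addOrderOf_eq_one_iff, hord]
    exact hm.ne'

end AddCircle

theorem Int.cast_dotProduct {ι R : Type*} [Fintype ι] [Ring R] (v w : ι → ℤ) :
    ((v ⬝ᵥ w : ℤ) : R) = (Int.cast ∘ v) ⬝ᵥ (Int.cast ∘ w) :=
  RingHom.map_dotProduct (Int.castRingHom R) v w

section Theta

variable {n : ℕ}

theorem continuous_theta (a : Fin n → ℤ) : Continuous (theta a) := by
  unfold theta
  fun_prop

theorem theta_nsmul (m : ℕ) (a : Fin n → ℤ) (x : Torus n) : theta (m • a) x = m • theta a x := by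
  simp only [theta, Finset.smul_sum, Pi.smul_apply, smul_assoc]

theorem theta_single (a : Fin n → ℤ) (j : Fin n) (y : AddCircle (1 : ℝ)) :
    theta a (Pi.single j y) = a j • y := by
  simp [theta, Pi.single_apply]

theorem theta_surjective {a : Fin n → ℤ} (ha : a ≠ 0) : Function.Surjective (theta a) := by
  obtain ⟨j, hj⟩ := Function.ne_iff.mp ha
  intro c
  obtain ⟨y, hy⟩ := DivisibleBy.surjective_smul (AddCircle (1 : ℝ)) ℤ hj c
  exact ⟨Pi.single j y, (theta_single a j y).trans hy⟩

theorem theta_coe (a : Fin n → ℤ) (u : Fin n → ℝ) :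
    theta a (fun i => (u i : AddCircle (1 : ℝ))) = ↑((Int.cast ∘ a) ⬝ᵥ u) := by
  rw [theta, dotProduct, ← QuotientAddGroup.mk'_apply, map_sum]
  exact Finset.sum_congr rfl fun i _ => by
    rw [QuotientAddGroup.mk'_apply, Function.comp_apply, ← zsmul_eq_mul, AddCircle.coe_zsmul]

theorem hyp_nsmul (m : ℕ) (a : Fin n → ℤ) (c : AddCircle (1 : ℝ)) :
    Hyp (m • a) c = theta a ⁻¹' {y | m • y = c} := by
  ext x
  simp only [Hyp, mem_preimage, mem_ofPred_eq, theta_nsmul]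

theorem not_isConnected_hyp_nsmul {a : Fin n → ℤ} (ha : a ≠ 0) {m : ℕ} (hm : 1 < m)
    (c : AddCircle (1 : ℝ)) : ¬ IsConnected (Hyp (m • a) c) := by
  rw [hyp_nsmul]
  rintro ⟨⟨x, hx : m • theta a x = c⟩, hconn⟩
  have himage := hconn.image _ (continuous_theta a).continuousOn
  rw [image_preimage_eq _ (theta_surjective ha), ← hx] at himage
  exact AddCircle.not_isPreconnected_setOf_nsmul_eq hm _ himage

theorem hyp_coe_eq_image {a z : Fin n → ℤ} (hz : a ⬝ᵥ z = 1) (t : ℝ) :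
    Hyp a t = (fun v i => (v i : AddCircle (1 : ℝ))) '' {v | (Int.cast ∘ a) ⬝ᵥ v = t} := by
  ext x
  constructor
  · intro hx
    choose u hu using fun i => QuotientAddGroup.mk_surjective (x i)
    obtain rfl : (fun i => (u i : AddCircle (1 : ℝ))) = x := funext hu
    rw [Hyp, mem_ofPred_eq, theta_coe, ← sub_eq_zero, ← AddCircle.coe_sub,
      AddCircle.coe_eq_zero_iff] at hx
    obtain ⟨k, hk⟩ := hx
    rw [zsmul_eq_mul, mul_one] at hk
    refine ⟨u - (k : ℝ) • (Int.cast ∘ z), ?_, funext fun i => ?_⟩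
    · rw [mem_ofPred_eq, dotProduct_sub, dotProduct_smul, ← Int.cast_dotProduct, hz,
        Int.cast_one, smul_eq_mul, mul_one, hk, sub_sub_cancel]
    · dsimp only
      rw [Pi.sub_apply, AddCircle.coe_sub, sub_eq_self, AddCircle.coe_eq_zero_iff]
      exact ⟨k * z i, by simp⟩
  · rintro ⟨v, hv, rfl⟩
    rw [Hyp, mem_ofPred_eq, theta_coe, hv]

theorem isConnected_hyp_of_gcd_eq_one {a : Fin n → ℤ} (ha : Finset.univ.gcd a = 1)
    (c : AddCircle (1 : ℝ)) : IsConnected (Hyp a c) := by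
  obtain ⟨z, hz⟩ := Finset.gcd_eq_sum_mul Finset.univ a
  replace hz : a ⬝ᵥ z = 1 := hz.symm.trans ha
  obtain ⟨t, rfl⟩ := QuotientAddGroup.mk_surjective c
  rw [hyp_coe_eq_image hz t]
  refine IsConnected.image ?_ _ (by fun_prop : Continuous _).continuousOn
  refine (convex_hyperplane ⟨dotProduct_add _, fun r v => dotProduct_smul r _ v⟩ t).isConnected
    ⟨t • (Int.cast ∘ z), ?_⟩
  rw [mem_ofPred_eq, dotProduct_smul, ← Int.cast_dotProduct, hz, Int.cast_one, smul_eq_mul,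
    mul_one]

theorem gcd_eq_one_of_isConnected_hyp {a : Fin n → ℤ} (ha : a ≠ 0)
    {c : AddCircle (1 : ℝ)} (h : IsConnected (Hyp a c)) : Finset.univ.gcd a = 1 := by
  obtain ⟨j, hj⟩ := Function.ne_iff.mp ha
  obtain ⟨b, hab, hb⟩ := Finset.extract_gcd a ⟨j, Finset.mem_univ j⟩
  obtain ⟨m, hm⟩ := Int.eq_ofNat_of_zero_le (Int.nonneg_of_normalize_eq_self
    (Finset.normalize_gcd (s := Finset.univ) (f := a)))
  have hm0 : m ≠ 0 := by
    rintro rfl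
    exact hj (Finset.gcd_eq_zero_iff.mp hm j (Finset.mem_univ j))
  have hb0 : b ≠ 0 := by
    rintro rfl
    exact zero_ne_one ((Finset.gcd_eq_zero_iff.mpr fun _ _ => rfl).symm.trans hb)
  have hab' : a = m • b := funext fun i => by
    rw [hab i (Finset.mem_univ i), hm, Pi.smul_apply, nsmul_eq_mul]
  by_contra hm1
  subst hab'
  exact not_isConnected_hyp_nsmul hb0 (by omega) c h

end Theta

theorem hyperplane_connected_iff_simple_general {n : ℕ} (a : Fin n → ℤ) (ha : a ≠ 0)
    (c : AddCircle (1 : ℝ)) :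
    IsConnected (Hyp a c) ↔ Finset.univ.gcd a = 1 :=
  ⟨gcd_eq_one_of_isConnected_hyp ha, fun h => isConnected_hyp_of_gcd_eq_one h c⟩

/-- An affine toric hyperplane `H = θ_a⁻¹(c)` on `Tⁿ` (with `a ≠ 0`, `n ≥ 1`) is connected
if and only if it is simple, i.e. `gcd(a₁, …, aₙ) = 1`. -/
theorem hyperplane_connected_iff_simple {n : ℕ} (hn : 1 ≤ n) (a : Fin n → ℤ) (ha : a ≠ 0)
    (c : AddCircle (1 : ℝ)) :
    IsConnected (Hyp a c) ↔ Finset.univ.gcd a = 1 :=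
  hyperplane_connected_iff_simple_general a ha c
end

section
/- Let (A, Tⁿ) be a spanning toric hyperplane arrangement in general position with |A| ≥ n. Then every connected component of the complement Tⁿ \ ⋃_{H ∈ A} H is simply connected. -/
open Set

/-- The set of connected components of a subset `A` of a topological space. -/
def comps {X : Type*} [TopologicalSpace X] (A : Set X) : Set (Set X) :=
  {C | ∃ x ∈ A, C = connectedComponentIn A x}

/-- An arrangement (given by normal vectors `a`) is spanning if some `n` of the normal
vectors are linearly independent over `ℚ`. -/
def Spanning {ι : Type*} [Fintype ι] {n : ℕ} (a : ι → Fin n → ℤ) : Prop :=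
  ∃ s : Finset ι, s.card = n ∧
    LinearIndependent ℚ (fun i : s => fun j => (a i.1 j : ℚ))

/-- An arrangement is in general position if for every subset `S` of hyperplanes with
nonempty intersection, the corresponding normal vectors are linearly independent over `ℚ`. -/
def GenPos {ι : Type*} [Fintype ι] {n : ℕ} (a : ι → Fin n → ℤ)
    (b : ι → AddCircle (1 : ℝ)) : Prop :=
  ∀ S : Finset ι, (⋂ i ∈ S, Hyp (a i) (b i)).Nonempty →
    LinearIndependent ℚ (fun i : S => fun j => (a i.1 j : ℚ))

/-! Lift to the universal cover `ℝⁿ → Tⁿ`. After choosing real lifts `cᵢ` of the intercepts, the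
preimage of the complement is the disjoint union of the open convex chambers
`{y | cᵢ + kᵢ < ⟨aᵢ, y⟩ < cᵢ + kᵢ + 1 for all i}`, `k ∈ ℤᵐ`, and translation by `v ∈ ℤⁿ` moves the
chamber of `k` to that of `k + a v`. So the images of the chambers are open, connected and pairwise
equal or disjoint, i.e. they are the components of the complement. As the normal vectors span,
`a v ≠ 0` for `v ≠ 0`: no nonzero lattice vector preserves a chamber, the projection is injective on
it, and each component is homeomorphic to an open convex set, hence contractible. -/

open Function Matrix Topology

theorem connectedComponentIn_eq_of_iUnion_isOpen {X ι : Type*} [TopologicalSpace X]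
    {U : ι → Set X} (hUo : ∀ k, IsOpen (U k)) (hUc : ∀ k, IsPreconnected (U k))
    (hU : ∀ k l, U k = U l ∨ Disjoint (U k) (U l)) {k : ι} {x : X} (hx : x ∈ U k) :
    connectedComponentIn (⋃ l, U l) x = U k := by
  have hrest : IsOpen ((⋃ l, U l) \ U k) := by
    rw [iUnion_sdiff]
    refine isOpen_iUnion fun l => ?_
    rcases hU l k with h | h
    · simp [h]
    · rw [h.sdiff_eq_left]; exact hUo l
  refine subset_antisymm ?_ ((hUc k).subset_connectedComponentIn hx (subset_iUnion U k))
  refine isPreconnected_connectedComponentIn.subset_left_of_subset_union (hUo k) hrest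
    disjoint_sdiff_self_right (fun y hy => ?_) ⟨x, mem_connectedComponentIn ⟨_, ⟨k, rfl⟩, hx⟩, hx⟩
  have := connectedComponentIn_subset _ _ hy
  by_cases hyk : y ∈ U k
  exacts [Or.inl hyk, Or.inr ⟨this, hyk⟩]

theorem Convex.simplyConnectedSpace_image {E Y : Type*} [NormedAddCommGroup E] [NormedSpace ℝ E]
    [TopologicalSpace Y] {f : E → Y} {s : Set E} (hs : Convex ℝ s) (hso : IsOpen s)
    (hne : s.Nonempty) (hf : Continuous f) (hfo : IsOpenMap f) (hinj : InjOn f s) :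
    SimplyConnectedSpace (f '' s) := by
  have he : IsOpenEmbedding (s.domRestrict f) :=
    .of_continuous_injective_isOpenMap (hf.comp continuous_subtype_val)
      (injOn_iff_injective.mp hinj) (hfo.domRestrict hso)
  have := hs.contractibleSpace hne
  have e : s ≃ₜ f '' s := he.isEmbedding.toHomeomorph.trans (.setCongr (range_domRestrict f s))
  have := e.symm.contractibleSpace
  infer_instance

namespace Torus

variable {n : ℕ}

noncomputable def mk (n : ℕ) (y : Fin n → ℝ) : Torus n := fun i => (y i : AddCircle (1 : ℝ))

theorem continuous_mk : Continuous (mk n) :=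
  continuous_pi fun i => continuous_quotient_mk'.comp (continuous_apply i)

theorem isOpenMap_mk : IsOpenMap (mk n) :=
  .piMap (fun _ => QuotientAddGroup.isOpenMap_coe)
    (.of_forall fun _ => QuotientAddGroup.mk_surjective)

theorem surjective_mk : Surjective (mk n) :=
  Surjective.piMap fun _ => QuotientAddGroup.mk_surjective

theorem mk_add_intCast (y : Fin n → ℝ) (v : Fin n → ℤ) : mk n (y + (↑) ∘ v) = mk n y := by
  funext i
  simp [mk]

theorem mk_eq_mk_iff {y z : Fin n → ℝ} :
    mk n y = mk n z ↔ ∃ v : Fin n → ℤ, y = z + (↑) ∘ v := by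
  simp only [mk, funext_iff, QuotientAddGroup.eq_iff_sub_mem, AddSubgroup.mem_zmultiples_iff,
    zsmul_one, Pi.add_apply, Function.comp_apply, Classical.skolem]
  exact exists_congr fun v => forall_congr' fun i => by constructor <;> intro h <;> linarith

theorem theta_mk (a : Fin n → ℤ) (y : Fin n → ℝ) :
    theta a (mk n y) = (((↑) ∘ a ⬝ᵥ y : ℝ) : AddCircle (1 : ℝ)) := by
  simp only [theta, mk, dotProduct, Function.comp_apply, ← zsmul_eq_mul, QuotientAddGroup.mk_sum,
    QuotientAddGroup.mk_zsmul]

theorem mk_mem_hyp_iff (a : Fin n → ℤ) (c : ℝ) (y : Fin n → ℝ) :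
    mk n y ∈ Hyp a c ↔ ∃ z : ℤ, (↑) ∘ a ⬝ᵥ y = c + z := by
  change theta a (mk n y) = c ↔ _
  rw [theta_mk, QuotientAddGroup.eq_iff_sub_mem, AddSubgroup.mem_zmultiples_iff]
  exact exists_congr fun z => by simp only [zsmul_one]; constructor <;> intro h <;> linarith

end Torus

section Chamber

variable {ι : Type*} {n : ℕ}

def chamber (a : ι → Fin n → ℤ) (c : ι → ℝ) (k : ι → ℤ) : Set (Fin n → ℝ) :=
  (Matrix.map a ((↑) : ℤ → ℝ) *ᵥ ·) ⁻¹' univ.pi fun i => Ioo (c i + k i) (c i + k i + 1)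

variable {a : ι → Fin n → ℤ} {c : ι → ℝ}

theorem mem_chamber {k : ι → ℤ} {y : Fin n → ℝ} :
    y ∈ chamber a c k ↔ ∀ i, c i + k i < (↑) ∘ a i ⬝ᵥ y ∧ (↑) ∘ a i ⬝ᵥ y < c i + k i + 1 := by
  simp only [chamber, mem_preimage, mem_univ_pi, mem_Ioo]
  rfl

theorem isOpen_chamber [Finite ι] (a : ι → Fin n → ℤ) (c : ι → ℝ) (k : ι → ℤ) :
    IsOpen (chamber a c k) :=
  (isOpen_set_pi finite_univ fun _ _ => isOpen_Ioo).preimage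
    (continuous_const.matrix_mulVec continuous_id)

theorem convex_chamber (a : ι → Fin n → ℤ) (c : ι → ℝ) (k : ι → ℤ) :
    Convex ℝ (chamber a c k) :=
  (convex_pi fun _ _ => convex_Ioo _ _).linear_preimage (mulVecLin _)

theorem eq_of_mem_chamber {k l : ι → ℤ} {y : Fin n → ℝ} (hk : y ∈ chamber a c k)
    (hl : y ∈ chamber a c l) : k = l := by
  funext i
  obtain ⟨hk₁, hk₂⟩ := mem_chamber.mp hk i
  obtain ⟨hl₁, hl₂⟩ := mem_chamber.mp hl i
  have h₁ : k i < l i + 1 := by exact_mod_cast (by linarith : (k i : ℝ) < l i + 1)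
  have h₂ : l i < k i + 1 := by exact_mod_cast (by linarith : (l i : ℝ) < k i + 1)
  omega

theorem add_intCast_mem_chamber_iff {k : ι → ℤ} {y : Fin n → ℝ} (v : Fin n → ℤ) :
    y + (↑) ∘ v ∈ chamber a c k ↔ y ∈ chamber a c (k - a *ᵥ v) := by
  have hshift : ∀ i, (↑) ∘ a i ⬝ᵥ (y + (↑) ∘ v) = (↑) ∘ a i ⬝ᵥ y + ((a *ᵥ v) i : ℝ) := by
    intro i
    rw [dotProduct_add]
    simp [mulVec, dotProduct]
  simp only [mem_chamber, hshift, Pi.sub_apply, Int.cast_sub]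
  exact forall_congr' fun i => by constructor <;> rintro ⟨h₁, h₂⟩ <;> constructor <;> linarith

theorem image_mk_chamber_sub_mulVec (k : ι → ℤ) (v : Fin n → ℤ) :
    Torus.mk n '' chamber a c (k - a *ᵥ v) = Torus.mk n '' chamber a c k := by
  ext x
  constructor
  · rintro ⟨y, hy, rfl⟩
    exact ⟨y + (↑) ∘ v, add_intCast_mem_chamber_iff v |>.mpr hy, Torus.mk_add_intCast y v⟩
  · rintro ⟨y, hy, rfl⟩
    refine ⟨y - (↑) ∘ v, (add_intCast_mem_chamber_iff v).mp (by simpa using hy), ?_⟩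
    conv_rhs => rw [← sub_add_cancel y ((↑) ∘ v), Torus.mk_add_intCast]

theorem image_mk_chamber_eq_or_disjoint (k l : ι → ℤ) :
    Torus.mk n '' chamber a c k = Torus.mk n '' chamber a c l ∨
      Disjoint (Torus.mk n '' chamber a c k) (Torus.mk n '' chamber a c l) := by
  refine or_iff_not_imp_right.mpr fun h => ?_
  obtain ⟨_, ⟨y, hy, rfl⟩, ⟨z, hz, hyz⟩⟩ := not_disjoint_iff.mp h
  obtain ⟨v, rfl⟩ := Torus.mk_eq_mk_iff.mp hyz
  rw [eq_of_mem_chamber hy ((add_intCast_mem_chamber_iff v).mp hz), image_mk_chamber_sub_mulVec]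

theorem Spanning.eq_zero_of_mulVec_eq_zero [Fintype ι] (h : Spanning a) {v : Fin n → ℤ}
    (hv : a *ᵥ v = 0) : v = 0 := by
  obtain ⟨s, hcard, hli⟩ := h
  have htop := hli.span_eq_top_of_card_eq_finrank' (by simp [hcard])
  -- `v` is orthogonal to the spanning rows indexed by `s`, hence to itself.
  have horth : ∀ u ∈ Submodule.span ℚ (range fun i : s => fun j => (a i j : ℚ)),
      u ⬝ᵥ ((↑) ∘ v) = 0 := by
    intro u hu
    induction hu using Submodule.span_induction with
    | mem u hu =>
      obtain ⟨i, rfl⟩ := hu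
      have := congrFun hv i
      simp only [mulVec, dotProduct, Pi.zero_apply, Function.comp_apply] at this ⊢
      exact_mod_cast this
    | zero => exact zero_dotProduct _
    | add u u' _ _ hu hu' => rw [add_dotProduct, hu, hu', add_zero]
    | smul r u _ hu => rw [smul_dotProduct, hu, smul_zero]
  have hv' : ((↑) ∘ v : Fin n → ℚ) = 0 :=
    dotProduct_self_eq_zero.mp (horth _ (htop ▸ Submodule.mem_top))
  funext j
  simpa using congrFun hv' j

theorem Spanning.injOn_mk_chamber [Fintype ι] (h : Spanning a) (k : ι → ℤ) :
    InjOn (Torus.mk n) (chamber a c k) := by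
  intro y hy z hz hyz
  obtain ⟨v, rfl⟩ := Torus.mk_eq_mk_iff.mp hyz
  have : a *ᵥ v = 0 := by
    simpa using congrArg (· - k) (eq_of_mem_chamber ((add_intCast_mem_chamber_iff v).mp hy) hz)
  simp [h.eq_zero_of_mulVec_eq_zero this]

theorem compl_iUnion_hyp_eq_iUnion_image_mk_chamber :
    univ \ ⋃ i, Hyp (a i) (c i) = ⋃ k, Torus.mk n '' chamber a c k := by
  refine subset_antisymm (fun x hx => ?_) (iUnion_subset fun k => ?_)
  · obtain ⟨y, rfl⟩ := Torus.surjective_mk x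
    simp only [mem_sdiff, mem_univ, true_and, mem_iUnion, not_exists, Torus.mk_mem_hyp_iff] at hx
    refine mem_iUnion.mpr ⟨fun i => ⌊(↑) ∘ a i ⬝ᵥ y - c i⌋, y, mem_chamber.mpr fun i => ?_, rfl⟩
    have hfloor := Int.floor_le ((↑) ∘ a i ⬝ᵥ y - c i)
    have hne : ((↑) ∘ a i ⬝ᵥ y - c i) ≠ ⌊(↑) ∘ a i ⬝ᵥ y - c i⌋ := fun he => hx i _ (by linarith)
    constructor
    · linarith [lt_of_le_of_ne hfloor hne.symm]
    · linarith [Int.lt_floor_add_one ((↑) ∘ a i ⬝ᵥ y - c i)]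
  · rintro _ ⟨y, hy, rfl⟩
    simp only [mem_sdiff, mem_univ, true_and, mem_iUnion, not_exists, Torus.mk_mem_hyp_iff]
    intro i z hz
    obtain ⟨h₁, h₂⟩ := mem_chamber.mp hy i
    rw [hz] at h₁ h₂
    have : k i < z := by exact_mod_cast (by linarith : (k i : ℝ) < z)
    have : z < k i + 1 := by exact_mod_cast (by linarith : (z : ℝ) < k i + 1)
    omega

end Chamber

theorem components_of_complement_simplyConnected_general {n m : ℕ}
    (a : Fin m → Fin n → ℤ) (b : Fin m → AddCircle (1 : ℝ))
    (hspan : Spanning a) :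
    ∀ C ∈ comps (Set.univ \ ⋃ i, Hyp (a i) (b i)), SimplyConnectedSpace ↥C := by
  choose c hc using fun i => QuotientAddGroup.mk_surjective (b i)
  obtain rfl : (fun i => (c i : AddCircle (1 : ℝ))) = b := funext hc
  rintro C ⟨x, hx, rfl⟩
  rw [compl_iUnion_hyp_eq_iUnion_image_mk_chamber] at hx ⊢
  obtain ⟨k, y, hy, rfl⟩ := mem_iUnion.mp hx
  rw [connectedComponentIn_eq_of_iUnion_isOpen
    (fun l => Torus.isOpenMap_mk _ (isOpen_chamber a c l))
    (fun l => ((convex_chamber a c l).isPreconnected.image _ Torus.continuous_mk.continuousOn))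
    image_mk_chamber_eq_or_disjoint (mem_image_of_mem _ hy)]
  exact (convex_chamber a c k).simplyConnectedSpace_image (isOpen_chamber a c k) ⟨y, hy⟩
    Torus.continuous_mk Torus.isOpenMap_mk (hspan.injOn_mk_chamber k)

/-- For a spanning toric hyperplane arrangement in general position with at least `n`
hyperplanes, every connected component of the complement of the arrangement is
simply connected. -/
theorem components_of_complement_simplyConnected {n m : ℕ}
    (a : Fin m → Fin n → ℤ) (b : Fin m → AddCircle (1 : ℝ))
    (ha : ∀ i, a i ≠ 0) (hm : n ≤ m) (hspan : Spanning a) (hgp : GenPos a b) :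
    ∀ C ∈ comps (Set.univ \ ⋃ i, Hyp (a i) (b i)), SimplyConnectedSpace ↥C :=
  components_of_complement_simplyConnected_general a b hspan
end
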